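/- Let Θ₁,…,Θ_n ⊆ L_CPL be finite nonempty sets such that every formula in Θ₁ ∪ … ∪ Θ_n is a conjunction of propositional variables or a disjunction of propositional variables, any two formulas in the same Θ_i are comparable with respect to ⊨_CPL, and the variable sets Var[Θ_i] are pairwise disjoint. Let Υ = Θ₁ ∪ … ∪ Θ_n and let V be a finite set of variables containing Var[Υ]. Then for every ⊨_CPL-monotone function f : Υ → [0,1] there exists a probabilistic model M = ⟨2^V, μ⟩ such that μ(‖π‖_M) = f(π) for every π ∈ Υ. -/

import Mathlib

open scoped Classical

/-- Classical propositional formulas (the language `L_CPL`), built from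
propositional variables (indexed by `ℕ`) using ¬, ∧, ∨. -/
inductive CPL where
  | var : ℕ → CPL
  | neg : CPL → CPL
  | and : CPL → CPL → CPL
  | or : CPL → CPL → CPL
deriving DecidableEq

namespace CPL

/-- The set of propositional variables occurring in a formula. -/
def vars : CPL → Finset ℕ
  | var p => {p}
  | neg φ => vars φ
  | and φ χ => vars φ ∪ vars χ
  | or φ χ => vars φ ∪ vars χ

/-- Classical evaluation of a formula under a Boolean valuation. -/
def eval (v : ℕ → Bool) : CPL → Bool
  | var p => v p
  | neg φ => !eval v φ
  | and φ χ => eval v φ && eval v χ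
  | or φ χ => eval v φ || eval v χ

/-- Evaluation of a formula at a state given as a set of variables:
the variables in `X` are true, all others false. -/
def evalSet (X : Finset ℕ) (φ : CPL) : Bool := eval (fun p => decide (p ∈ X)) φ

/-- CPL-satisfiability. -/
def Satisfiable (φ : CPL) : Prop := ∃ v, eval v φ = true

/-- CPL-validity. -/
def Valid (φ : CPL) : Prop := ∀ v, eval v φ = true

/-- Classical entailment `φ ⊨_CPL χ`. -/
def Entails (φ χ : CPL) : Prop := ∀ v, eval v φ = true → eval v χ = true

/-- A literal: a variable or a negated variable. -/
def IsLiteral (φ : CPL) : Prop := (∃ p, φ = var p) ∨ ∃ p, φ = neg (var p)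

/-- An `L_CPL`-term: a conjunction of literals. -/
inductive IsTerm : CPL → Prop
  | lit {φ} : IsLiteral φ → IsTerm φ
  | conj {φ χ} : IsTerm φ → IsTerm χ → IsTerm (and φ χ)

/-- A conjunction of propositional variables. -/
inductive IsConjVars : CPL → Prop
  | var (p : ℕ) : IsConjVars (var p)
  | conj {φ χ} : IsConjVars φ → IsConjVars χ → IsConjVars (and φ χ)

/-- A disjunction of propositional variables. -/
inductive IsDisjVars : CPL → Prop
  | var (p : ℕ) : IsDisjVars (var p)
  | disj {φ χ} : IsDisjVars φ → IsDisjVars χ → IsDisjVars (or φ χ)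

/-- Variables occurring as positive literals (in a term). -/
def posVars : CPL → Finset ℕ
  | var p => {p}
  | neg _ => ∅
  | and φ χ => posVars φ ∪ posVars χ
  | or _ _ => ∅

/-- Variables occurring as negated literals (in a term). -/
def negVars : CPL → Finset ℕ
  | var _ => ∅
  | neg (var p) => {p}
  | neg _ => ∅
  | and φ χ => negVars φ ∪ negVars χ
  | or _ _ => ∅

/-- The literals occurring in a term. -/
def lits (φ : CPL) : Finset CPL :=
  (posVars φ).image var ∪ (negVars φ).image (fun p => neg (var p))

end CPL

/-- A state (possible world) over a finite set `V` of variables: a subset of `V`. -/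
abbrev World (V : Finset ℕ) := {X : Finset ℕ // X ⊆ V}

/-- A probabilistic model for `V`: a finitely additive probability measure
`μ : 2^(2^V) → [0,1]`. -/
structure ProbModel (V : Finset ℕ) where
  μ : Set (World V) → ℝ
  nonneg : ∀ A, 0 ≤ μ A
  le_one : ∀ A, μ A ≤ 1
  m_univ : μ Set.univ = 1
  m_empty : μ ∅ = 0
  m_add : ∀ A B : Set (World V), Disjoint A B → μ (A ∪ B) = μ A + μ B

/-- The truth set `‖φ‖_M` of a classical formula in a probabilistic model for `V`. -/
def truthSet (V : Finset ℕ) (φ : CPL) : Set (World V) :=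
  {w | CPL.evalSet w.1 φ = true}

/-- Comparison symbols ◇ ∈ {≤, <, >, ≥}. -/
inductive Ineq where
  | le | lt | gt | ge
deriving DecidableEq

/-- The relation denoted by a comparison symbol. -/
def Ineq.holds : Ineq → ℝ → ℝ → Prop
  | le, x, c => x ≤ c
  | lt, x, c => x < c
  | gt, x, c => x > c
  | ge, x, c => x ≥ c

/-- Formulas of the probabilistic language `L^Q_Pr`, built from probabilistic atoms
`Pr(φ)` and `Pr(φ)◇c̄` using ¬, △, ⊙, ⊕, →. -/
inductive FP where
  | prob : CPL → FP
  | probIneq : CPL → Ineq → ℚ → FP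
  | neg : FP → FP
  | delta : FP → FP
  | conj : FP → FP → FP
  | disj : FP → FP → FP
  | impl : FP → FP → FP
deriving DecidableEq

namespace FP

/-- Well-formedness: all rational constants lie in `[0,1] ∩ ℚ`. -/
def WF : FP → Prop
  | prob _ => True
  | probIneq _ _ c => 0 ≤ c ∧ c ≤ 1
  | neg α => WF α
  | delta α => WF α
  | conj α β => WF α ∧ WF β
  | disj α β => WF α ∧ WF β
  | impl α β => WF α ∧ WF β

/-- The variables of an `L^Q_Pr`-formula. -/
def vars : FP → Finset ℕ
  | prob φ => φ.vars
  | probIneq φ _ _ => φ.vars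
  | neg α => vars α
  | delta α => vars α
  | conj α β => vars α ∪ vars β
  | disj α β => vars α ∪ vars β
  | impl α β => vars α ∪ vars β

/-- The events `E(α)`: the classical formulas occurring in probabilistic atoms of `α`. -/
def events : FP → Finset CPL
  | prob φ => {φ}
  | probIneq φ _ _ => {φ}
  | neg α => events α
  | delta α => events α
  | conj α β => events α ∪ events β
  | disj α β => events α ∪ events β
  | impl α β => events α ∪ events β

/-- The FP-interpretation `I_M` induced by a probabilistic model `M`. -/
noncomputable def interp {V : Finset ℕ} (M : ProbModel V) : FP → ℝ
  | prob φ => M.μ (truthSet V φ)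
  | probIneq φ d c => if d.holds (M.μ (truthSet V φ)) (c : ℝ) then 1 else 0
  | neg α => 1 - interp M α
  | delta α => if interp M α = 1 then 1 else 0
  | conj α β => max 0 (interp M α + interp M β - 1)
  | disj α β => min 1 (interp M α + interp M β)
  | impl α β => min 1 (1 - interp M α + interp M β)

/-- `α` is FP-satisfiable: `I_M(α) = 1` in some probabilistic model for `Var(α)`. -/
def Satisfiable (α : FP) : Prop := ∃ M : ProbModel α.vars, interp M α = 1

/-- `α` is FP-valid: `I_M(α) = 1` in every probabilistic model for `Var(α)`. -/
def Valid (α : FP) : Prop := ∀ M : ProbModel α.vars, interp M α = 1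

/-- `α ⊨_FP β`: `I_M(β) = 1` in every probabilistic model for the variables of
`{α, β}` with `I_M(α) = 1`. -/
def Entails1 (α β : FP) : Prop :=
  ∀ M : ProbModel (α.vars ∪ β.vars), interp M α = 1 → interp M β = 1

/-- The variables of a finite set of `L^Q_Pr`-formulas. -/
def varsSet (Γ : Finset FP) : Finset ℕ := Γ.sup vars

/-- A finite set `Γ` is FP-satisfiable (`Γ ⊭_FP ⊥`): some probabilistic model for
the variables of `Γ` makes every member of `Γ` equal to `1`. -/
def SetSatisfiable (Γ : Finset FP) : Prop :=
  ∃ M : ProbModel (varsSet Γ), ∀ γ ∈ Γ, interp M γ = 1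

/-- `Γ ⊨_FP δ`: every probabilistic model for the variables of `Γ ∪ {δ}` satisfying
all of `Γ` satisfies `δ`. -/
def EntailsFin (Γ : Finset FP) (δ : FP) : Prop :=
  ∀ M : ProbModel (varsSet Γ ∪ δ.vars), (∀ γ ∈ Γ, interp M γ = 1) → interp M δ = 1

/-- `Γ ⊨^cons_FP δ`: `Γ ⊨_FP δ` and `Γ ⊭_FP ⊥`. -/
def ConsEntails (Γ : Finset FP) (δ : FP) : Prop :=
  EntailsFin Γ δ ∧ SetSatisfiable Γ

/-- The set of permitted values `V_Pr(Pr(φ)◇c̄)`. -/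
def permittedValues (φ : CPL) (d : Ineq) (c : ℚ) : Set ℝ :=
  {x | ∃ (V : Finset ℕ) (M : ProbModel V), φ.vars ⊆ V ∧
      interp M (probIneq φ d c) = 1 ∧ M.μ (truthSet V φ) = x}

end FP

/-- Formulas of the Łukasiewicz language `L^Q_Ł`, built from propositional variables
and truth-constant literals `p◇c̄` using ¬, △, ⊙, ⊕, →. -/
inductive Luk where
  | var : ℕ → Luk
  | ineq : ℕ → Ineq → ℚ → Luk
  | neg : Luk → Luk
  | delta : Luk → Luk
  | conj : Luk → Luk → Luk
  | disj : Luk → Luk → Luk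
  | impl : Luk → Luk → Luk
deriving DecidableEq

/-- An Ł-valuation: a function `Var → [0,1]`. -/
structure LukVal where
  v : ℕ → ℝ
  mem : ∀ p, v p ∈ Set.Icc (0 : ℝ) 1

/-- Extension of an Ł-valuation to all `L^Q_Ł`-formulas. -/
noncomputable def LukVal.eval (val : LukVal) : Luk → ℝ
  | .var p => val.v p
  | .ineq p d c => if d.holds (val.v p) (c : ℝ) then 1 else 0
  | .neg φ => 1 - val.eval φ
  | .delta φ => if val.eval φ = 1 then 1 else 0
  | .conj φ χ => max 0 (val.eval φ + val.eval χ - 1)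
  | .disj φ χ => min 1 (val.eval φ + val.eval χ)
  | .impl φ χ => min 1 (1 - val.eval φ + val.eval χ)

namespace Luk

/-- Well-formedness: all rational constants lie in `[0,1] ∩ ℚ`. -/
def WF : Luk → Prop
  | var _ => True
  | ineq _ _ c => 0 ≤ c ∧ c ≤ 1
  | neg φ => WF φ
  | delta φ => WF φ
  | conj φ χ => WF φ ∧ WF χ
  | disj φ χ => WF φ ∧ WF χ
  | impl φ χ => WF φ ∧ WF χ

/-- `Φ ⊨_Ł χ` for a finite set `Φ`. -/
def EntailsFin (Φ : Finset Luk) (χ : Luk) : Prop :=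
  ∀ val : LukVal, (∀ φ ∈ Φ, val.eval φ = 1) → val.eval χ = 1

/-- `φ` is Ł-valid. -/
def ValidL (φ : Luk) : Prop := ∀ val : LukVal, val.eval φ = 1

/-- A set of `L^Q_Ł`-formulas is Ł-satisfiable. -/
def SatisfiableSet (S : Set Luk) : Prop := ∃ val : LukVal, ∀ φ ∈ S, val.eval φ = 1

/-- The probabilistic counterpart `φ^Pr` of a Łukasiewicz formula. -/
def toFP : Luk → FP
  | var p => .prob (.var p)
  | ineq p d c => .probIneq (.var p) d c
  | neg φ => .neg (toFP φ)
  | delta φ => .delta (toFP φ)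
  | conj φ χ => .conj (toFP φ) (toFP χ)
  | disj φ χ => .disj (toFP φ) (toFP χ)
  | impl φ χ => .impl (toFP φ) (toFP χ)

end Luk

namespace FP

/-- The outer counterpart `α^↑` of an `L^Q_Pr`-formula, replacing each atom `Pr(φ)`
by the fresh variable `e φ` (and `Pr(φ)◇c̄` by `(e φ)◇c̄`). -/
def outer (e : CPL → ℕ) : FP → Luk
  | prob φ => .var (e φ)
  | probIneq φ d c => .ineq (e φ) d c
  | neg α => .neg (outer e α)
  | delta α => .delta (outer e α)
  | conj α β => .conj (outer e α) (outer e β)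
  | disj α β => .disj (outer e α) (outer e β)
  | impl α β => .impl (outer e α) (outer e β)

end FP

/-- The ⊙-conjunction of a (nonempty) list of `L^Q_Pr`-formulas. -/
def bigConjFP : List FP → FP
  | [] => .probIneq (.var 0) .ge 0
  | a :: t => t.foldl .conj a

/-- The ∨-disjunction of a (nonempty) list of classical formulas. -/
def bigDisjCPL : List CPL → CPL
  | [] => .var 0
  | a :: t => t.foldl .or a

/-- The PIT `⊙_i Pr(τ_i)≤c̄_i ⊙ ⊙_i Pr(τ_i)≥c̄_i` associated with the list of
pairs `(τ_i, c_i)`. -/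
def completePITFormula (L : List (CPL × ℚ)) : FP :=
  bigConjFP (L.map (fun t => FP.probIneq t.1 .le t.2) ++
             L.map (fun t => FP.probIneq t.1 .ge t.2))

/-- `τ` is an `L_CPL`-term containing, for every `p ∈ V`, exactly one of the
literals `p` and `¬p` (and no other variables). -/
def IsCompleteTermOver (V : Finset ℕ) (τ : CPL) : Prop :=
  CPL.IsTerm τ ∧ τ.vars ⊆ V ∧ ∀ p ∈ V, (p ∈ τ.posVars ↔ p ∉ τ.negVars)

/-- Membership in `𝒱 = {0, 1/n, …, (n−1)/n, 1}`. -/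
def memVSet (n : ℕ) (c : ℚ) : Prop := ∃ k : ℕ, k ≤ n ∧ c = (k : ℚ) / (n : ℚ)

/-- The data `(τ_i, c_i)` of a `⟨V,𝒱⟩`-complete PIT (with `𝒱` given by `n`). -/
def IsCompletePIT (V : Finset ℕ) (n : ℕ) (L : List (CPL × ℚ)) : Prop :=
  (L.map Prod.fst).Nodup ∧
  (∀ t ∈ L, IsCompleteTermOver V t.1 ∧ memVSet n t.2) ∧
  (L.map Prod.snd).sum = 1

/-- A measure is coherent with a value assignment `pr` on the events `E`. -/
def coherent {V : Finset ℕ} (M : ProbModel V) (E : Finset CPL) (pr : CPL → ℚ) : Prop :=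
  ∀ ψ ∈ E, M.μ (truthSet V ψ) = (pr ψ : ℝ)

/-- Conditional probability `Pr_μ(φ | χ) = μ(‖φ∧χ‖)/μ(‖χ‖)`. -/
noncomputable def condProb {V : Finset ℕ} (M : ProbModel V) (φ χ : CPL) : ℝ :=
  M.μ (truthSet V (CPL.and φ χ)) / M.μ (truthSet V χ)

/-- `τ` is a solution to the PrAP `⟨{φ}, χ, H, E, pr⟩`: an `L_CPL`-term composed of
literals from `H` s.t. `φ, τ ⊨_CPL χ` and some probabilistic model coherent with `pr`
gives `μ(‖φ∧τ‖) > 0`. -/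
def IsPrAPSolution (φ χ : CPL) (H E : Finset CPL) (pr : CPL → ℚ) (τ : CPL) : Prop :=
  CPL.IsTerm τ ∧ τ.lits ⊆ H ∧
  (∀ v, CPL.eval v φ = true → CPL.eval v τ = true → CPL.eval v χ = true) ∧
  ∃ M : ProbModel (φ.vars ∪ χ.vars),
    coherent M E pr ∧ 0 < M.μ (truthSet (φ.vars ∪ χ.vars) (CPL.and φ τ))

/-- `τ` is a preferred solution: a solution s.t. for every other solution `σ` there is
a probabilistic model coherent with `pr` with `μ(‖τ‖) ≥ μ(‖σ‖)`. -/
def IsPreferredPrAPSolution (φ χ : CPL) (H E : Finset CPL) (pr : CPL → ℚ) (τ : CPL) : Prop :=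
  IsPrAPSolution φ χ H E pr τ ∧
  ∀ σ, IsPrAPSolution φ χ H E pr σ → σ ≠ τ →
    ∃ M : ProbModel (φ.vars ∪ χ.vars),
      coherent M E pr ∧
      M.μ (truthSet (φ.vars ∪ χ.vars) σ) ≤ M.μ (truthSet (φ.vars ∪ χ.vars) τ)

/-- The FP-counterpart `Ξ_p = {Pr(ψ)≈c̄ : ψ ∈ E, p(ψ) = c}` of a value assignment,
where `Pr(ψ)≈c̄` abbreviates `(Pr(ψ)≥c̄) ⊙ (Pr(ψ)≤c̄)`. -/
def XiP (E : Finset CPL) (pr : CPL → ℚ) : Finset FP :=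
  E.image (fun ψ => FP.conj (FP.probIneq ψ .ge (pr ψ)) (FP.probIneq ψ .le (pr ψ)))

/-- The next weakest PIL `λ^♭_𝒱` of the PIL `Pr(τ)◇(k/n)`. -/
def flatPIL (n : ℕ) (τ : CPL) (d : Ineq) (k : ℕ) : FP :=
  match d with
  | .ge => FP.probIneq τ .gt (((k : ℚ) - 1) / (n : ℚ))
  | .gt => FP.probIneq τ .ge ((k : ℚ) / (n : ℚ))
  | .le => FP.probIneq τ .lt (((k : ℚ) + 1) / (n : ℚ))
  | .lt => FP.probIneq τ .le ((k : ℚ) / (n : ℚ))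

/-- The theory `Ψ_Γ = Γ^↑ ∪ {p_φ → p_χ : φ, χ ∈ E[Γ], φ ⊨_CPL χ}`. -/
def PsiGamma (Γ : Finset FP) (e : CPL → ℕ) : Set Luk :=
  (fun α => FP.outer e α) '' (↑Γ : Set FP) ∪
  {ψ | ∃ φ ∈ Γ.sup FP.events, ∃ χ ∈ Γ.sup FP.events,
        CPL.Entails φ χ ∧ ψ = Luk.impl (.var (e φ)) (.var (e χ))}

/-- The conjunction `hd ∧ ⋀_{q ∈ s} q`. -/
def conjVarsFrom (hd : CPL) (s : Finset ℕ) : CPL :=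
  (s.sort (· ≤ ·)).foldl (fun acc q => CPL.and acc (CPL.var q)) hd

/-!
For every threshold `c` there is a world `W c` at which exactly the `π ∈ Υ` with `c ≤ f π` are
true; drawing `t` uniformly from `(0, 1]` and taking the law of `W t` then gives
`μ ‖π‖ = P(t ≤ f π) = f π`. Inside one chain `Θ i`, the formulas with `c ≤ f π` form an
up-set for `⊨`: its strongest member does not entail the weakest formula outside it, and a
valuation witnessing this is the required world on the variables of `Θ i`. Disjointness of
the variable sets lets these valuations be glued.
-/

open MeasureTheory Set

namespace CPL

theorem eval_congr {φ : CPL} {v w : ℕ → Bool} (h : ∀ p ∈ φ.vars, v p = w p) :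
    eval v φ = eval w φ := by
  induction φ with
  | var p => exact h p (Finset.mem_singleton_self p)
  | neg φ ih => simp only [eval, ih h]
  | and φ χ ihφ ihχ =>
    simp only [eval, ihφ fun p hp => h p (Finset.mem_union_left _ hp),
      ihχ fun p hp => h p (Finset.mem_union_right _ hp)]
  | or φ χ ihφ ihχ =>
    simp only [eval, ihφ fun p hp => h p (Finset.mem_union_left _ hp),
      ihχ fun p hp => h p (Finset.mem_union_right _ hp)]

theorem IsConjVars.eval_const {φ : CPL} (h : IsConjVars φ) (b : Bool) :
    eval (fun _ => b) φ = b := by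
  induction h with
  | var => rfl
  | conj _ _ ihφ ihχ => simp [eval, ihφ, ihχ]

theorem IsDisjVars.eval_const {φ : CPL} (h : IsDisjVars φ) (b : Bool) :
    eval (fun _ => b) φ = b := by
  induction h with
  | var => rfl
  | disj _ _ ihφ ihχ => simp [eval, ihφ, ihχ]

theorem satisfiable_of_eval_const {φ : CPL} (h : ∀ b, eval (fun _ => b) φ = b) :
    Satisfiable φ :=
  ⟨_, h true⟩

theorem not_valid_of_eval_const {φ : CPL} (h : ∀ b, eval (fun _ => b) φ = b) :
    ¬ Valid φ := fun hφ => by simpa [h] using hφ fun _ => false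

theorem exists_entails_forall_of_chain {s : Finset CPL} (hs : s.Nonempty)
    (hchain : ∀ π ∈ s, ∀ ρ ∈ s, Entails π ρ ∨ Entails ρ π) :
    ∃ ρ ∈ s, ∀ π ∈ s, Entails ρ π := by
  obtain ⟨ρ, hρ, hmin⟩ :=
    s.finite_toSet.exists_minimalFor (fun φ => {v | eval v φ = true}) _ hs
  exact ⟨ρ, hρ, fun π hπ => (hchain ρ hρ π hπ).elim id fun h => hmin hπ fun v => h v⟩

theorem exists_forall_entails_of_chain {s : Finset CPL} (hs : s.Nonempty)
    (hchain : ∀ π ∈ s, ∀ ρ ∈ s, Entails π ρ ∨ Entails ρ π) :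
    ∃ σ ∈ s, ∀ π ∈ s, Entails π σ := by
  obtain ⟨σ, hσ, hmax⟩ :=
    s.finite_toSet.exists_maximalFor (fun φ => {v | eval v φ = true}) _ hs
  exact ⟨σ, hσ, fun π hπ => (hchain σ hσ π hπ).elim (fun h => hmax hπ fun v => h v) id⟩

theorem exists_valuation_separating {U N : Finset CPL}
    (hU : ∀ π ∈ U, ∀ ρ ∈ U, Entails π ρ ∨ Entails ρ π)
    (hN : ∀ π ∈ N, ∀ ρ ∈ N, Entails π ρ ∨ Entails ρ π)
    (hsep : ∀ π ∈ U, ∀ σ ∈ N, ¬ Entails π σ)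
    (hsat : ∀ π ∈ U, Satisfiable π) (hnv : ∀ σ ∈ N, ¬ Valid σ) :
    ∃ v, (∀ π ∈ U, eval v π = true) ∧ ∀ σ ∈ N, eval v σ = false := by
  have false_of_entails {σ : CPL} {v : ℕ → Bool} (hσ : eval v σ = false)
      (hmax : ∀ τ ∈ N, Entails τ σ) : ∀ τ ∈ N, eval v τ = false := fun τ hτ =>
    Bool.eq_false_iff.2 fun h => by simp [hmax τ hτ v h] at hσ
  rcases U.eq_empty_or_nonempty with rfl | hUne <;>
    rcases N.eq_empty_or_nonempty with rfl | hNne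
  · exact ⟨fun _ => true, by simp, by simp⟩
  · obtain ⟨σ, hσ, hmax⟩ := exists_forall_entails_of_chain hNne hN
    obtain ⟨v, hv⟩ := not_forall.1 (hnv σ hσ)
    exact ⟨v, by simp, false_of_entails (by simpa using hv) hmax⟩
  · obtain ⟨ρ, hρ, hmin⟩ := exists_entails_forall_of_chain hUne hU
    obtain ⟨v, hv⟩ := hsat ρ hρ
    exact ⟨v, fun π hπ => hmin π hπ v hv, by simp⟩
  · obtain ⟨ρ, hρ, hmin⟩ := exists_entails_forall_of_chain hUne hU
    obtain ⟨σ, hσ, hmax⟩ := exists_forall_entails_of_chain hNne hN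
    obtain ⟨v, hvρ, hvσ⟩ : ∃ v, eval v ρ = true ∧ eval v σ = false := by
      simpa [Entails] using hsep ρ hρ σ hσ
    exact ⟨v, fun π hπ => hmin π hπ v hvρ, false_of_entails hvσ hmax⟩

theorem exists_valuation_iff_le_of_chain {Θ : Finset CPL} {f : CPL → ℝ}
    (hchain : ∀ π ∈ Θ, ∀ ρ ∈ Θ, Entails π ρ ∨ Entails ρ π)
    (hmono : ∀ π ∈ Θ, ∀ ρ ∈ Θ, Entails π ρ → f π ≤ f ρ)
    (hsat : ∀ π ∈ Θ, Satisfiable π) (hnv : ∀ π ∈ Θ, ¬ Valid π) (c : ℝ) :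
    ∃ v, ∀ π ∈ Θ, eval v π = true ↔ c ≤ f π := by
  have hsub {p : CPL → Prop} {π : CPL} (hπ : π ∈ Θ.filter p) : π ∈ Θ :=
    (Finset.mem_filter.1 hπ).1
  obtain ⟨v, hvU, hvN⟩ := exists_valuation_separating (U := Θ.filter (c ≤ f ·))
    (N := Θ.filter (f · < c))
    (fun π hπ ρ hρ => hchain π (hsub hπ) ρ (hsub hρ))
    (fun π hπ ρ hρ => hchain π (hsub hπ) ρ (hsub hρ))
    (fun π hπ σ hσ h => by
      simp only [Finset.mem_filter] at hπ hσ
      linarith [hmono π hπ.1 σ hσ.1 h])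
    (fun π hπ => hsat π (hsub hπ)) (fun σ hσ => hnv σ (hsub hσ))
  refine ⟨v, fun π hπ => ?_⟩
  rcases le_or_gt c (f π) with hc | hc
  · simp [hvU π (Finset.mem_filter.2 ⟨hπ, hc⟩), hc]
  · simp [hvN π (Finset.mem_filter.2 ⟨hπ, hc⟩), hc]

end CPL

theorem exists_eq_on_pairwise_disjoint {ι : Type*} {A : ι → Finset ℕ}
    (hA : ∀ i j, i ≠ j → Disjoint (A i) (A j)) (v : ι → ℕ → Bool) :
    ∃ w : ℕ → Bool, ∀ i, ∀ p ∈ A i, w p = v i p := by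
  refine ⟨fun p => decide (∀ i, p ∈ A i → v i p = true), fun i p hp => ?_⟩
  have hunique : ∀ j, p ∈ A j → j = i := fun j hj =>
    by_contra fun hji => Finset.disjoint_left.1 (hA j i hji) hj hp
  cases h : v i p
  · simpa using ⟨i, hp, h⟩
  · simpa using fun j hj => hunique j hj ▸ h

open CPL in
theorem exists_world_iff_le {ι : Type*} [Fintype ι] (Θ : ι → Finset CPL)
    (hsat : ∀ i, ∀ π ∈ Θ i, Satisfiable π) (hnv : ∀ i, ∀ π ∈ Θ i, ¬ Valid π)
    (hchain : ∀ i, ∀ π ∈ Θ i, ∀ ρ ∈ Θ i, Entails π ρ ∨ Entails ρ π)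
    (hdisj : ∀ i j, i ≠ j → Disjoint ((Θ i).sup vars) ((Θ j).sup vars))
    (V : Finset ℕ) (hV : (Finset.univ.sup Θ).sup vars ⊆ V) (f : CPL → ℝ)
    (hmono : ∀ π ∈ Finset.univ.sup Θ, ∀ ρ ∈ Finset.univ.sup Θ, Entails π ρ → f π ≤ f ρ)
    (c : ℝ) :
    ∃ w : World V, ∀ π ∈ Finset.univ.sup Θ, evalSet w.1 π = true ↔ c ≤ f π := by
  have hsub (i : ι) : Θ i ⊆ Finset.univ.sup Θ := Finset.le_sup (Finset.mem_univ i)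
  choose v hv using fun i => exists_valuation_iff_le_of_chain (hchain i)
    (fun π hπ ρ hρ => hmono π (hsub i hπ) ρ (hsub i hρ)) (hsat i) (hnv i) c
  obtain ⟨w, hw⟩ := exists_eq_on_pairwise_disjoint hdisj v
  refine ⟨⟨V.filter (w ·), Finset.filter_subset _ _⟩, fun π hπ => ?_⟩
  obtain ⟨i, -, hπi⟩ := Finset.mem_sup.1 hπ
  have hπV : π.vars ⊆ V := (Finset.le_sup (f := vars) hπ).trans hV
  have hπΘ : π.vars ⊆ (Θ i).sup vars := Finset.le_sup hπi
  rw [← hv i π hπi, evalSet]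
  exact iff_of_eq <| congrArg (· = true) <| eval_congr fun p hp => by
    simp [hπV hp, hw i p (hπΘ hp)]

theorem exists_isProbabilityMeasure_of_forall_exists_iff_le {Ω ι : Type*} [MeasurableSpace Ω]
    [Finite ι] {E : ι → Set Ω} (hE : ∀ i, MeasurableSet (E i)) {a : ι → ℝ}
    (ha : ∀ i, a i ∈ Icc 0 1) (h : ∀ c : ℝ, ∃ ω, ∀ i, ω ∈ E i ↔ c ≤ a i) :
    ∃ ν : Measure Ω, IsProbabilityMeasure ν ∧ ∀ i, ν (E i) = ENNReal.ofReal (a i) := by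
  have : Nonempty Ω := let ⟨ω, _⟩ := h 0; ⟨ω⟩
  let pattern : ℝ → ι → Bool := fun c i => decide (c ≤ a i)
  let realise : (ι → Bool) → Ω := fun b =>
    Classical.epsilon fun ω => ∀ i, ω ∈ E i ↔ b i = true
  let W : ℝ → Ω := realise ∘ pattern
  have hW (c : ℝ) (i : ι) : W c ∈ E i ↔ c ≤ a i := by
    have hc : ∃ ω, ∀ i, ω ∈ E i ↔ pattern c i = true := by simpa [pattern] using h c
    exact (Classical.epsilon_spec hc i).trans decide_eq_true_iff
  have hWm : Measurable W :=
    (measurable_of_countable realise).comp <| measurable_pi_lambda _ fun i =>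
      measurable_to_bool <| by
        convert measurableSet_Iic (a := a i) using 1
        ext t
        simp [pattern]
  have : IsProbabilityMeasure (volume.restrict (Ioc (0 : ℝ) 1)) :=
    ⟨by simp [Real.volume_Ioc]⟩
  refine ⟨(volume.restrict (Ioc (0 : ℝ) 1)).map W,
    Measure.isProbabilityMeasure_map hWm.aemeasurable, fun i => ?_⟩
  have hpre : W ⁻¹' E i ∩ Ioc 0 1 = Ioc 0 (a i) := by
    ext t
    simp only [mem_inter_iff, mem_preimage, hW, mem_Ioc]
    constructor
    · exact fun ⟨hta, ht0, _⟩ => ⟨ht0, hta⟩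
    · exact fun ⟨ht0, hta⟩ => ⟨hta, ht0, hta.trans (ha i).2⟩
  rw [Measure.map_apply hWm (hE i), Measure.restrict_apply' measurableSet_Ioc, hpre,
    Real.volume_Ioc, sub_zero]

instance (V : Finset ℕ) : MeasurableSpace (World V) := ⊤

instance (V : Finset ℕ) : DiscreteMeasurableSpace (World V) :=
  ⟨fun _ => MeasurableSpace.measurableSet_top⟩

noncomputable def ProbModel.ofMeasure {V : Finset ℕ} (ν : Measure (World V))
    [IsProbabilityMeasure ν] : ProbModel V where
  μ := ν.real
  nonneg _ := measureReal_nonneg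
  le_one _ := measureReal_le_one
  m_univ := probReal_univ
  m_empty := measureReal_empty
  m_add _ _ h := measureReal_union h (DiscreteMeasurableSpace.forall_measurableSet _)

theorem exists_probModel_of_forall_exists_world {V : Finset ℕ} {Υ : Finset CPL}
    {f : CPL → ℝ} (hf : ∀ π ∈ Υ, f π ∈ Icc 0 1)
    (h : ∀ c : ℝ, ∃ w : World V, ∀ π ∈ Υ, CPL.evalSet w.1 π = true ↔ c ≤ f π) :
    ∃ M : ProbModel V, ∀ π ∈ Υ, M.μ (truthSet V π) = f π := by
  obtain ⟨ν, hν, hνE⟩ := exists_isProbabilityMeasure_of_forall_exists_iff_le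
    (E := fun π : Υ => truthSet V π) (fun _ => DiscreteMeasurableSpace.forall_measurableSet _)
    (fun π => hf π π.2) fun c => (h c).imp fun w hw π => hw π π.2
  exact ⟨ProbModel.ofMeasure ν, fun π hπ => by
    simp [ProbModel.ofMeasure, measureReal_def, hνE ⟨π, hπ⟩, (hf π hπ).1]⟩

theorem stmt7_general (n : ℕ) (Θ : Fin n → Finset CPL)
    (hform : ∀ i, ∀ π ∈ Θ i, CPL.IsConjVars π ∨ CPL.IsDisjVars π)
    (hchain : ∀ i, ∀ π ∈ Θ i, ∀ ρ ∈ Θ i, CPL.Entails π ρ ∨ CPL.Entails ρ π)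
    (hdisj : ∀ i j, i ≠ j → Disjoint ((Θ i).sup CPL.vars) ((Θ j).sup CPL.vars))
    (V : Finset ℕ) (hV : (Finset.univ.sup Θ).sup CPL.vars ⊆ V)
    (f : CPL → ℝ)
    (hrange : ∀ π ∈ Finset.univ.sup Θ, f π ∈ Set.Icc (0 : ℝ) 1)
    (hmono : ∀ π ∈ Finset.univ.sup Θ, ∀ ρ ∈ Finset.univ.sup Θ,
      CPL.Entails π ρ → f π ≤ f ρ) :
    ∃ M : ProbModel V, ∀ π ∈ Finset.univ.sup Θ, M.μ (truthSet V π) = f π := by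
  have heval : ∀ i, ∀ π ∈ Θ i, ∀ b, CPL.eval (fun _ => b) π = b := fun i π hπ =>
    (hform i π hπ).elim CPL.IsConjVars.eval_const CPL.IsDisjVars.eval_const
  exact exists_probModel_of_forall_exists_world hrange <|
    exists_world_iff_le Θ (fun i π hπ => CPL.satisfiable_of_eval_const (heval i π hπ))
      (fun i π hπ => CPL.not_valid_of_eval_const (heval i π hπ)) hchain hdisj V hV f hmono

/-- Monotone assignments on chained positive sets extend to probabilistic
models: if `Υ = Θ₁ ∪ … ∪ Θ_n` with each formula a conjunction or disjunction of
variables, formulas in each `Θ_i` pairwise `⊨_CPL`-comparable, the variable sets of the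
`Θ_i` pairwise disjoint, and `V ⊇ Var[Υ]`, then every `⊨_CPL`-monotone
`f : Υ → [0,1]` is realised by some probabilistic model `M = ⟨2^V, μ⟩`
via `μ(‖π‖_M) = f(π)`. -/
theorem stmt7 (n : ℕ) (Θ : Fin n → Finset CPL)
    (hne : ∀ i, (Θ i).Nonempty)
    (hform : ∀ i, ∀ π ∈ Θ i, CPL.IsConjVars π ∨ CPL.IsDisjVars π)
    (hchain : ∀ i, ∀ π ∈ Θ i, ∀ ρ ∈ Θ i, CPL.Entails π ρ ∨ CPL.Entails ρ π)
    (hdisj : ∀ i j, i ≠ j → Disjoint ((Θ i).sup CPL.vars) ((Θ j).sup CPL.vars))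
    (V : Finset ℕ) (hV : (Finset.univ.sup Θ).sup CPL.vars ⊆ V)
    (f : CPL → ℝ)
    (hrange : ∀ π ∈ Finset.univ.sup Θ, f π ∈ Set.Icc (0 : ℝ) 1)
    (hmono : ∀ π ∈ Finset.univ.sup Θ, ∀ ρ ∈ Finset.univ.sup Θ,
      CPL.Entails π ρ → f π ≤ f ρ) :
    ∃ M : ProbModel V, ∀ π ∈ Finset.univ.sup Θ, M.μ (truthSet V π) = f π :=
  stmt7_general n Θ hform hchain hdisj V hV f hrange hmono
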